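/- For an entrywise nonnegative square matrix A, the spectral radius ρ(A) is strictly less than 1 if and only if the matrix I − A is invertible and (I − A)^{-1} is entrywise nonnegative. -/

import Mathlib

/-!
Both sides are equivalent to `A ^ k → 0`. For the spectral side this holds in any complex Banach
algebra: Gelfand's formula gives `‖A ^ k‖ ≤ r ^ k` for some `r < 1`, and conversely `z ∈ σ A`
gives `z ^ k ∈ σ (A ^ k)`, so `‖z‖ ^ k ≤ ‖A ^ k‖ → 0`. For the other side, the partial sums
`S k = ∑ m < k, A ^ m` satisfy `S k = (1 - A)⁻¹ (1 - A ^ k)`. If `A ^ k → 0`, then `1 - A` is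
invertible and `S k → (1 - A)⁻¹`, a limit of nonnegative matrices. If `(1 - A)⁻¹ ≥ 0`, then
`S k ≤ (1 - A)⁻¹` entrywise, so the nonnegative series `∑ A ^ m` converges entrywise and its terms
tend to `0`.
-/

open Filter Topology Finset

theorem spectrum.norm_lt_one_of_tendsto_pow_atTop_nhds_zero {𝕜 A : Type*} [NormedField 𝕜]
    [NormedRing A] [NormedAlgebra 𝕜 A] [CompleteSpace A] {a : A}
    (ha : Tendsto (a ^ ·) atTop (𝓝 0)) {z : 𝕜} (hz : z ∈ spectrum 𝕜 a) : ‖z‖ < 1 := by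
  have hpow : Tendsto (fun k => ‖z‖ ^ k) atTop (𝓝 0) := by
    refine squeeze_zero (fun _ => by positivity) (fun k => ?_)
      (by simpa using ha.norm.mul_const ‖(1 : A)‖)
    simpa [norm_pow] using spectrum.norm_le_norm_mul_of_mem (spectrum.pow_mem_pow a k hz)
  simpa [abs_of_nonneg (norm_nonneg z)] using tendsto_pow_atTop_nhds_zero_iff.1 hpow

theorem tendsto_pow_atTop_nhds_zero_of_spectralRadius_lt_one {A : Type*} [NormedRing A]
    [NormedAlgebra ℂ A] [CompleteSpace A] {a : A} (ha : spectralRadius ℂ a < 1) :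
    Tendsto (a ^ ·) atTop (𝓝 0) := by
  obtain ⟨r, hρr, hr1⟩ := ENNReal.lt_iff_exists_nnreal_btwn.mp ha
  rw [ENNReal.coe_lt_one_iff] at hr1
  have hgelfand := spectrum.pow_nnnorm_pow_one_div_tendsto_nhds_spectralRadius a
  have hbound : ∀ᶠ k : ℕ in atTop, ‖a ^ k‖₊ ≤ r ^ k := by
    filter_upwards [hgelfand.eventually_lt_const hρr, eventually_ne_atTop 0] with k hk hk0
    have := ENNReal.rpow_le_rpow hk.le (Nat.cast_nonneg k)
    rwa [← ENNReal.rpow_mul, one_div, inv_mul_cancel₀ (Nat.cast_ne_zero.2 hk0), ENNReal.rpow_one,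
      ENNReal.rpow_natCast, ← ENNReal.coe_pow, ENNReal.coe_le_coe] at this
  refine squeeze_zero_norm' ?_ (tendsto_pow_atTop_nhds_zero_of_lt_one r.coe_nonneg hr1)
  filter_upwards [hbound] with k hk
  exact_mod_cast hk

theorem spectrum.tendsto_pow_atTop_nhds_zero_iff_forall_norm_lt_one {A : Type*} [NormedRing A]
    [NormedAlgebra ℂ A] [CompleteSpace A] (a : A) :
    Tendsto (a ^ ·) atTop (𝓝 0) ↔ ∀ z ∈ spectrum ℂ a, ‖z‖ < 1 := by
  refine ⟨fun ha z hz => norm_lt_one_of_tendsto_pow_atTop_nhds_zero ha hz, fun h => ?_⟩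
  nontriviality A
  refine tendsto_pow_atTop_nhds_zero_of_spectralRadius_lt_one ?_
  simpa using spectralRadius_lt_of_forall_lt a (r := 1) fun z hz => by exact_mod_cast h z hz

theorem geom_sum_eq_mul_one_sub_pow {R : Type*} [Ring R] {a b : R} (hb : b * (1 - a) = 1)
    (k : ℕ) : ∑ i ∈ range k, a ^ i = b * (1 - a ^ k) := by
  rw [← mul_neg_geom_sum, ← mul_assoc, hb, one_mul]

theorem tendsto_geom_sum_of_tendsto_pow_atTop_nhds_zero {R : Type*} [Ring R] [TopologicalSpace R]
    [IsTopologicalRing R] {a b : R} (hb : b * (1 - a) = 1) (ha : Tendsto (a ^ ·) atTop (𝓝 0)) :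
    Tendsto (fun k => ∑ i ∈ range k, a ^ i) atTop (𝓝 b) := by
  simpa [geom_sum_eq_mul_one_sub_pow hb] using
    ((tendsto_const_nhds (x := 1)).sub ha).const_mul b

namespace Matrix

variable {ι : Type*} [Fintype ι] [DecidableEq ι]

section

-- Any Banach algebra norm would do: neither the spectrum nor the topology depends on it.
attribute [local instance] Matrix.linftyOpNormedRing Matrix.linftyOpNormedAlgebra

theorem tendsto_pow_atTop_nhds_zero_iff_forall_norm_lt_one (A : Matrix ι ι ℂ) :
    Tendsto (A ^ ·) atTop (𝓝 0) ↔ ∀ z ∈ spectrum ℂ A, ‖z‖ < 1 :=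
  spectrum.tendsto_pow_atTop_nhds_zero_iff_forall_norm_lt_one A

end

theorem tendsto_map_ofReal_pow_atTop_nhds_zero_iff (A : Matrix ι ι ℝ) :
    Tendsto (A.map Complex.ofReal ^ ·) atTop (𝓝 0) ↔ Tendsto (A ^ ·) atTop (𝓝 0) := by
  rw [(Complex.isometry_ofReal.isEmbedding.isInducing.matrix_map).tendsto_nhds_iff,
    Matrix.map_zero _ Complex.ofReal_zero]
  simp only [Function.comp_def]
  congr! 2 with k
  exact (Matrix.map_pow A Complex.ofRealHom k).symm

theorem isUnit_one_sub_of_tendsto_pow_atTop_nhds_zero {K : Type*} [Field K] [TopologicalSpace K]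
    [IsTopologicalRing K] [T1Space K] {A : Matrix ι ι K} (hA : Tendsto (A ^ ·) atTop (𝓝 0)) :
    IsUnit (1 - A) := by
  have hdet : Tendsto (fun k => (1 - A ^ k).det) atTop (𝓝 1) := by
    simpa [Function.comp_def] using
      (continuous_id.matrix_det.tendsto _).comp ((tendsto_const_nhds (x := 1)).sub hA)
  obtain ⟨k, hk⟩ := (hdet.eventually_ne one_ne_zero).exists
  rw [← mul_neg_geom_sum, det_mul] at hk
  exact (isUnit_iff_isUnit_det _).2 (left_ne_zero_of_mul hk).isUnit

variable {A : Matrix ι ι ℝ}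

theorem inv_one_sub_apply_nonneg_of_tendsto_pow_atTop_nhds_zero (hA : ∀ i j, 0 ≤ A i j)
    (hpow : Tendsto (A ^ ·) atTop (𝓝 0)) (i j : ι) : 0 ≤ (1 - A)⁻¹ i j := by
  have hinv : (1 - A)⁻¹ * (1 - A) = 1 := nonsing_inv_mul _
    ((isUnit_iff_isUnit_det _).1 (isUnit_one_sub_of_tendsto_pow_atTop_nhds_zero hpow))
  have hsum : Tendsto (fun k => ∑ m ∈ range k, A ^ m) atTop (𝓝 (1 - A)⁻¹) :=
    tendsto_geom_sum_of_tendsto_pow_atTop_nhds_zero hinv hpow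
  refine ge_of_tendsto' (tendsto_pi_nhds.1 (tendsto_pi_nhds.1 hsum i) j) fun k => ?_
  rw [sum_apply]
  exact sum_nonneg fun m _ => pow_apply_nonneg hA m i j

theorem tendsto_pow_atTop_nhds_zero_of_inv_one_sub_nonneg (hA : ∀ i j, 0 ≤ A i j)
    (hU : IsUnit (1 - A)) (hB : ∀ i j, 0 ≤ (1 - A)⁻¹ i j) : Tendsto (A ^ ·) atTop (𝓝 0) := by
  have hinv : (1 - A)⁻¹ * (1 - A) = 1 := nonsing_inv_mul _ ((isUnit_iff_isUnit_det _).1 hU)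
  refine tendsto_pi_nhds.2 fun i => tendsto_pi_nhds.2 fun j => ?_
  have hle : ∀ k, ∑ m ∈ range k, (A ^ m) i j ≤ (1 - A)⁻¹ i j := fun k => by
    have hk := congr_fun₂ (geom_sum_eq_mul_one_sub_pow hinv k) i j
    rw [sum_apply, mul_sub, mul_one, sub_apply] at hk
    rw [hk, sub_le_self_iff, mul_apply]
    exact sum_nonneg fun l _ => mul_nonneg (hB i l) (pow_apply_nonneg hA k l j)
  exact (summable_of_sum_range_le (fun m => pow_apply_nonneg hA m i j) hle).tendsto_atTop_zero

theorem tendsto_pow_atTop_nhds_zero_iff_isUnit_one_sub_and_inv_nonneg (hA : ∀ i j, 0 ≤ A i j) :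
    Tendsto (A ^ ·) atTop (𝓝 0) ↔ IsUnit (1 - A) ∧ ∀ i j, 0 ≤ (1 - A)⁻¹ i j :=
  ⟨fun h => ⟨isUnit_one_sub_of_tendsto_pow_atTop_nhds_zero h,
      inv_one_sub_apply_nonneg_of_tendsto_pow_atTop_nhds_zero hA h⟩,
    fun ⟨hU, hB⟩ => tendsto_pow_atTop_nhds_zero_of_inv_one_sub_nonneg hA hU hB⟩

end Matrix

theorem nonneg_matrix_schur_iff_inverse_nonneg
    (n : ℕ) (A : Matrix (Fin n) (Fin n) ℝ) (hA : ∀ i j, 0 ≤ A i j) :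
    (∀ z ∈ spectrum ℂ (A.map Complex.ofReal), ‖z‖ < 1) ↔
      (IsUnit (1 - A) ∧ ∀ i j, 0 ≤ (1 - A)⁻¹ i j) := by
  rw [← Matrix.tendsto_pow_atTop_nhds_zero_iff_forall_norm_lt_one,
    Matrix.tendsto_map_ofReal_pow_atTop_nhds_zero_iff]
  exact Matrix.tendsto_pow_atTop_nhds_zero_iff_isUnit_one_sub_and_inv_nonneg hA
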